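/- arXiv:1408.2108 — 5 statements merged into one kernel-verified Lean document; each statement's English description precedes it below -/
import Mathlib

section
/- Let q ≥ 2 and λ > 0. There exists a positive function g : ℕ → ℝ with g(1) = λ g(0) and g(n-1) + q g(n+1) = λ (q+1) g(n) for all n ≥ 1 if and only if λ ≥ 2√q/(q+1). -/
set_option maxHeartbeats 1000000


theorem tree_radial_positive_eigenfunction_iff (q : ℕ) (hq : 2 ≤ q) (lam : ℝ) (hlam : 0 < lam) :
    (∃ g : ℕ → ℝ, (∀ n, 0 < g n) ∧ g 1 = lam * g 0 ∧
      ∀ n : ℕ, 1 ≤ n → g (n - 1) + (q : ℝ) * g (n + 1) = lam * ((q : ℝ) + 1) * g n)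
    ↔ 2 * Real.sqrt q / ((q : ℝ) + 1) ≤ lam := by
  have hQ2 : (2:ℝ) ≤ (q:ℝ) := by exact_mod_cast hq
  have hQ0 : (0:ℝ) < (q:ℝ) := by linarith
  set Q : ℝ := (q:ℝ) with hQdef
  set L : ℝ := lam * (Q + 1) with hLdef
  have hL0 : 0 < L := by
    have : (0:ℝ) < Q + 1 := by linarith
    exact mul_pos hlam this
  have hsqQ : Real.sqrt Q ^ 2 = Q := Real.sq_sqrt hQ0.le
  have hsqQ0 : 0 ≤ Real.sqrt Q := Real.sqrt_nonneg _
  constructor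
  · rintro ⟨g, hpos, h1, hrec⟩
    by_contra hlt
    push_neg at hlt
    rw [lt_div_iff₀ (by linarith : (0:ℝ) < Q + 1)] at hlt
    -- now hlt : lam * (Q+1) < 2 * sqrt Q, i.e. L < 2√Q
    have hLlt : L ^ 2 < 4 * Q := by nlinarith [hlt]
    set c : ℝ := (4*Q - L^2) / (4 * Q^2 * lam) with hcdef
    have hc0 : 0 < c := by
      apply div_pos (by linarith) (by positivity)
    have hclam : 4*Q^2*lam*c = 4*Q - L^2 := by
      rw [hcdef]; field_simp
    have hrec' : ∀ m : ℕ, g m + Q * g (m+2) = L * g (m+1) := by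
      intro m
      have := hrec (m+1) (by omega)
      simpa using this
    have key : ∀ n : ℕ, g (n+1) ≤ (lam - n * c) * g n := by
      intro n
      induction n with
      | zero => simp [h1]
      | succ n ih =>
        rcases le_or_gt (lam - n*c) 0 with hng | hng
        · exfalso
          have h1' := hpos n
          have h2' := hpos (n+1)
          nlinarith [ih]
        · set t : ℝ := lam - n*c with htdef
          have hgn := hpos n
          have hgn1 := hpos (n+1)
          have hrm := hrec' n
          have hquad : 4*Q - L^2 ≤ 4*Q*(Q*t^2 - L*t + 1) := by
            nlinarith [sq_nonneg (2*Q*t - L)]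
          have htlam : t ≤ lam := by
            have : 0 ≤ (n:ℝ) * c := by positivity
            rw [htdef]; linarith
          have hqct : 4*Q*(Q*c*t) ≤ 4*Q - L^2 := by
            nlinarith [hclam, mul_pos hQ0 hc0, htlam]
          have haux : t * (L + Q*c - Q*t) ≤ 1 := by
            nlinarith [hquad, hqct, hQ0]
          have hkey : (L + Q*c - Q*t) * g (n+1) ≤ g n := by
            rcases le_or_gt (L + Q*c - Q*t) 0 with hs | hs
            · have h' : (L + Q*c - Q*t) * g (n+1) ≤ 0 :=
                mul_nonpos_of_nonpos_of_nonneg hs hgn1.le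
              linarith
            · have h1' : (L + Q*c - Q*t) * g (n+1) ≤ (L + Q*c - Q*t) * (t * g n) :=
                mul_le_mul_of_nonneg_left ih hs.le
              have h2' : t * (L + Q*c - Q*t) * g n ≤ 1 * g n :=
                mul_le_mul_of_nonneg_right haux hgn.le
              nlinarith [h1', h2']
          have h2 : Q * g (n+2) ≤ Q * ((t - c) * g (n+1)) := by
            nlinarith [hrm, hkey]
          have h3 : g (n+2) ≤ (t - c) * g (n+1) :=
            le_of_mul_le_mul_left h2 hQ0
          have : (lam - (↑(n+1) : ℝ) * c) = t - c := by push_cast [htdef]; ring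
          rw [this]
          exact h3
    obtain ⟨n, hn⟩ := exists_nat_gt (lam / c)
    have hneg : lam - n * c < 0 := by
      rw [div_lt_iff₀ hc0] at hn; linarith
    have := key n
    nlinarith [hpos n, hpos (n+1)]
  · intro hge
    have hLge : 2 * Real.sqrt Q ≤ L := by
      rw [div_le_iff₀ (by linarith : (0:ℝ) < Q + 1)] at hge
      linarith
    have hD : 0 ≤ L^2 - 4*Q := by nlinarith
    set s : ℝ := Real.sqrt (L^2 - 4*Q) with hsdef
    have hs2 : s^2 = L^2 - 4*Q := Real.sq_sqrt hD
    have hs0 : 0 ≤ s := Real.sqrt_nonneg _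
    have hsL : s < L := by nlinarith
    set b : ℝ := (L - s) / (2*Q) with hbdef
    have hQb : 2*Q*b = L - s := by rw [hbdef]; field_simp
    have hb0 : 0 < b := div_pos (by linarith) (by linarith)
    have hblam : b ≤ lam := by
      rw [hbdef, div_le_iff₀ (by linarith : (0:ℝ) < 2*Q)]
      nlinarith
    have hbLs : b * (L + s) = 2 := by
      have h4 : 2*Q*(b*(L+s)) = 2*Q*2 := by linear_combination (L+s)*hQb - hs2
      exact mul_left_cancel₀ (by positivity) h4
    set f : ℕ → ℝ × ℝ := fun n =>
      Nat.rec ((1:ℝ), lam) (fun _ p => (p.2, (L * p.2 - p.1)/Q)) n with hfdef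
    have hstep : ∀ n, f (n+1) = ((f n).2, (L * (f n).2 - (f n).1)/Q) := fun _ => rfl
    have hf0 : f 0 = (1, lam) := rfl
    have inv : ∀ n, 0 < (f n).1 ∧ b * (f n).1 ≤ (f n).2 := by
      intro n
      induction n with
      | zero =>
        rw [hf0]
        constructor
        · norm_num
        · simpa using hblam
      | succ n ih =>
        obtain ⟨ha, hab⟩ := ih
        have hx : 0 < (f n).2 := lt_of_lt_of_le (mul_pos hb0 ha) hab
        rw [hstep]
        refine ⟨hx, ?_⟩
        show b * (f n).2 ≤ (L * (f n).2 - (f n).1)/Q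
        rw [le_div_iff₀ hQ0]
        nlinarith [mul_le_mul_of_nonneg_right hab (show (0:ℝ) ≤ L + s by linarith),
          hbLs, hQb, ha, hx]
    refine ⟨fun n => (f n).1, fun n => (inv n).1, ?_, ?_⟩
    · show (f 1).1 = lam * (f 0).1
      have hf1 : (f 1).1 = lam := rfl
      have hf00 : (f 0).1 = 1 := rfl
      rw [hf1, hf00]; ring
    · intro n hn
      obtain ⟨m, rfl⟩ : ∃ m, n = m + 1 := ⟨n - 1, by omega⟩
      show (f (m+1-1)).1 + Q * (f (m+1+1)).1 = L * (f (m+1)).1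
      have e1 : m + 1 - 1 = m := rfl
      rw [e1, hstep (m+1), hstep m]
      show (f m).1 + Q * ((L * (f m).2 - (f m).1)/Q) = L * (f m).2
      field_simp
      ring
end

section
/- Fix an integer q ≥ 2. Define R⁰(n,m) = R(n,m) φ₀(m) / (ρ φ₀(n)) where ρ = 2√q/(q+1), φ₀(n) = (1 + n(q-1)/(q+1)) q^{-n/2}, R(0,1)=1, R(n,n-1)=1/(q+1), R(n,n+1)=q/(q+1) for n ≥ 1. Then R⁰ is a transition probability (rows sum to 1), and as q → ∞, R⁰(n,m) converges to B(n,m), where B(0,1)=1, B(n,n+1)=(n+2)/(2(n+1)), B(n,n-1)=n/(2(n+1)) for n ≥ 1. -/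
open Filter Topology

/-- Radial kernel of the simple random walk on the homogeneous tree `T_q`. -/
noncomputable def treeR (q : ℕ) (n m : ℕ) : ℝ :=
  if n = 0 then (if m = 1 then 1 else 0)
  else if m + 1 = n then 1 / ((q : ℝ) + 1)
  else if m = n + 1 then (q : ℝ) / ((q : ℝ) + 1)
  else 0

/-- Ground state of the radial kernel. -/
noncomputable def treePhi0 (q : ℕ) (n : ℕ) : ℝ :=
  (1 + n * ((q : ℝ) - 1) / ((q : ℝ) + 1)) * (q : ℝ) ^ (-(n : ℝ) / 2)

/-- Doob transform of the radial kernel by its ground state. -/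
noncomputable def treeR0 (q : ℕ) (n m : ℕ) : ℝ :=
  treeR q n m * treePhi0 q m / ((2 * Real.sqrt q / ((q : ℝ) + 1)) * treePhi0 q n)

/-- Discrete Bessel(3) kernel. -/
noncomputable def besselKer (n m : ℕ) : ℝ :=
  if n = 0 then (if m = 1 then 1 else 0)
  else if m = n + 1 then ((n : ℝ) + 2) / (2 * ((n : ℝ) + 1))
  else if m + 1 = n then (n : ℝ) / (2 * ((n : ℝ) + 1))
  else 0

noncomputable def cc (q k : ℕ) : ℝ := 1 + (k : ℝ) * ((q : ℝ) - 1) / ((q : ℝ) + 1)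

lemma cc_pos {q : ℕ} (hq : 1 ≤ q) (k : ℕ) : 0 < cc q k := by
  have h1 : (1:ℝ) ≤ q := by exact_mod_cast hq
  have h2 : (0:ℝ) ≤ (k : ℝ) * ((q : ℝ) - 1) / ((q : ℝ) + 1) :=
    div_nonneg (mul_nonneg (Nat.cast_nonneg _) (by linarith)) (by linarith)
  unfold cc; linarith

lemma phi0_eq (q k : ℕ) : treePhi0 q k = cc q k * (q : ℝ) ^ (-(k : ℝ) / 2) := rfl

-- case m+1 = n
lemma treeR0_down {q : ℕ} (hq : 1 ≤ q) {n m : ℕ} (h : m + 1 = n) :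
    treeR0 q n m = cc q m / (2 * cc q n) := by
  have hn0 : n ≠ 0 := by omega
  have hQ : (0:ℝ) < q := by exact_mod_cast Nat.pos_of_ne_zero (by omega)
  have hS : (0:ℝ) < Real.sqrt q := Real.sqrt_pos.mpr hQ
  have hQ1 : (0:ℝ) < (q:ℝ) + 1 := by linarith
  have hE : (0:ℝ) < (q:ℝ) ^ (-(n:ℝ)/2) := Real.rpow_pos_of_pos hQ _
  have hcn := cc_pos hq n
  have hm : (m:ℝ) = (n:ℝ) - 1 := by
    have := congrArg (Nat.cast : ℕ → ℝ) h; push_cast at this; linarith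
  have hpow : (q:ℝ) ^ (-(m:ℝ)/2) = (q:ℝ) ^ (-(n:ℝ)/2) * Real.sqrt q := by
    rw [Real.sqrt_eq_rpow, ← Real.rpow_add hQ]
    congr 1; rw [hm]; ring
  have hne : m ≠ n + 1 := by omega
  rw [treeR0, phi0_eq, phi0_eq, treeR, if_neg hn0, if_pos h, hpow]
  field_simp

-- case m = n+1
lemma treeR0_up {q : ℕ} (hq : 1 ≤ q) {n m : ℕ} (hn0 : n ≠ 0) (h : m = n + 1) :
    treeR0 q n m = cc q m / (2 * cc q n) := by
  have hQ : (0:ℝ) < q := by exact_mod_cast Nat.pos_of_ne_zero (by omega)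
  have hS : (0:ℝ) < Real.sqrt q := Real.sqrt_pos.mpr hQ
  have hSS : Real.sqrt q * Real.sqrt q = q := Real.mul_self_sqrt hQ.le
  have hQ1 : (0:ℝ) < (q:ℝ) + 1 := by linarith
  have hE : (0:ℝ) < (q:ℝ) ^ (-(n:ℝ)/2) := Real.rpow_pos_of_pos hQ _
  have hcn := cc_pos hq n
  have hm : (m:ℝ) = (n:ℝ) + 1 := by exact_mod_cast congrArg (Nat.cast : ℕ → ℝ) h
  have hne : ¬ (m + 1 = n) := by omega
  have hpow : (q:ℝ) ^ (-(m:ℝ)/2) = (q:ℝ) ^ (-(n:ℝ)/2) * (Real.sqrt q)⁻¹ := by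
    rw [show (Real.sqrt q)⁻¹ = (q:ℝ) ^ (-(1:ℝ)/2) by
      rw [Real.sqrt_eq_rpow, ← Real.rpow_neg hQ.le]; norm_num, ← Real.rpow_add hQ]
    congr 1; rw [hm]; ring
  rw [treeR0, phi0_eq, phi0_eq, treeR, if_neg hn0, if_neg hne, if_pos h, hpow]
  field_simp
  linear_combination (-(cc q m)) * hSS

lemma treeR0_zero_of {q : ℕ} {n m : ℕ} (hn0 : n ≠ 0) (h1 : m + 1 ≠ n) (h2 : m ≠ n + 1) :
    treeR0 q n m = 0 := by
  rw [treeR0, treeR, if_neg hn0, if_neg h1, if_neg h2]; ring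

lemma treeR0_zero_one {q : ℕ} (hq : 1 ≤ q) : treeR0 q 0 1 = 1 := by
  have hQ : (0:ℝ) < q := by exact_mod_cast hq
  have hS : (0:ℝ) < Real.sqrt q := Real.sqrt_pos.mpr hQ
  have hSS : Real.sqrt q * Real.sqrt q = q := Real.mul_self_sqrt hQ.le
  have hQ1 : (0:ℝ) < (q:ℝ) + 1 := by linarith
  have hp1 : (q:ℝ) ^ (-(1:ℝ)/2) = (Real.sqrt q)⁻¹ := by
    rw [Real.sqrt_eq_rpow, ← Real.rpow_neg hQ.le]; norm_num
  rw [treeR0, treeR, treePhi0, treePhi0]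
  simp only [Nat.cast_one, Nat.cast_zero, if_pos rfl, if_true]
  rw [show (-(0:ℝ)/2) = 0 by norm_num, Real.rpow_zero, show (-(1:ℝ)/2 : ℝ) = -(1:ℝ)/2 by norm_num, hp1]
  field_simp
  linear_combination (-2 * ((q:ℝ)+1)) * hSS

lemma treeR0_zero_ne {q : ℕ} {m : ℕ} (hm : m ≠ 1) : treeR0 q 0 m = 0 := by
  rw [treeR0, treeR, if_pos rfl, if_neg hm]; ring

lemma sum_row {q : ℕ} (hq : 1 ≤ q) (n : ℕ) : ∑' m : ℕ, treeR0 q n m = 1 := by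
  rcases Nat.eq_zero_or_pos n with hn | hn
  · subst hn
    rw [tsum_eq_single 1 (fun b hb => treeR0_zero_ne hb)]
    exact treeR0_zero_one hq
  · have hn0 : n ≠ 0 := hn.ne'
    have hsum : ∑' m : ℕ, treeR0 q n m = ∑ m ∈ ({n-1, n+1} : Finset ℕ), treeR0 q n m := by
      refine tsum_eq_sum ?_
      intro m hm
      simp only [Finset.mem_insert, Finset.mem_singleton] at hm
      push_neg at hm
      exact treeR0_zero_of hn0 (by omega) hm.2
    rw [hsum, Finset.sum_pair (by omega)]
    rw [treeR0_down hq (by omega : (n-1) + 1 = n), treeR0_up hq hn0 rfl]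
    have hcn := (cc_pos hq n).ne'
    have hcast : ((n-1 : ℕ) : ℝ) = (n:ℝ) - 1 := by
      have : (1:ℕ) ≤ n := hn
      push_cast [this]; ring
    have hQ1 : ((q:ℝ) + 1) ≠ 0 := by positivity
    rw [← add_div, div_eq_one_iff_eq (by simpa using mul_ne_zero two_ne_zero hcn)]
    unfold cc
    rw [hcast]
    push_cast
    field_simp
    ring

lemma tendsto_cc (k : ℕ) : Tendsto (fun q : ℕ => cc q k) atTop (𝓝 (1 + k)) := by
  have h1 : Tendsto (fun q : ℕ => ((q:ℝ) + 1)) atTop atTop :=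
    tendsto_atTop_add_const_right _ 1 tendsto_natCast_atTop_atTop
  have h2 : Tendsto (fun q : ℕ => ((q:ℝ) - 1) / ((q:ℝ) + 1)) atTop (𝓝 1) := by
    have : Tendsto (fun q : ℕ => 1 - 2 / ((q:ℝ) + 1)) atTop (𝓝 (1 - 0)) :=
      tendsto_const_nhds.sub (tendsto_const_nhds.div_atTop h1)
    rw [sub_zero] at this
    refine this.congr' ?_
    filter_upwards [eventually_ge_atTop 1] with q hq
    have : ((q:ℝ) + 1) ≠ 0 := by positivity
    field_simp
    ring
  have : Tendsto (fun q : ℕ => 1 + (k:ℝ) * (((q:ℝ) - 1) / ((q:ℝ) + 1))) atTop (𝓝 (1 + (k:ℝ) * 1)) :=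
    tendsto_const_nhds.add (tendsto_const_nhds.mul h2)
  simp only [mul_one] at this
  refine this.congr ?_
  intro q; unfold cc; ring

lemma tendsto_ratio (a b : ℕ) :
    Tendsto (fun q : ℕ => cc q a / (2 * cc q b)) atTop (𝓝 ((1 + a) / (2 * (1 + b)))) := by
  exact (tendsto_cc a).div (tendsto_const_nhds.mul (tendsto_cc b)) (by positivity)


theorem doob_transform_converges_to_discrete_bessel :
    (∀ q : ℕ, 2 ≤ q → ∀ n : ℕ, ∑' m : ℕ, treeR0 q n m = 1) ∧
    (∀ n m : ℕ, Tendsto (fun q : ℕ => treeR0 q n m) atTop (𝓝 (besselKer n m))) := by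
  constructor
  · intro q hq n
    exact sum_row (by omega) n
  · intro n m
    rcases Nat.eq_zero_or_pos n with hn | hn
    · subst hn
      rcases eq_or_ne m 1 with hm | hm
      · subst hm
        have : besselKer 0 1 = 1 := by simp [besselKer]
        rw [this]
        refine tendsto_const_nhds.congr' ?_
        filter_upwards [eventually_ge_atTop 1] with q hq
        exact (treeR0_zero_one hq).symm
      · have : besselKer 0 m = 0 := by simp [besselKer, hm]
        rw [this]
        refine tendsto_const_nhds.congr (fun q => (treeR0_zero_ne hm).symm)
    · have hn0 : n ≠ 0 := hn.ne'
      rcases eq_or_ne m (n + 1) with hm | hm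
      · have hb : besselKer n m = (1 + (m:ℝ)) / (2 * (1 + (n:ℝ))) := by
          rw [besselKer, if_neg hn0, if_pos hm, hm]
          push_cast; ring_nf
        rw [hb]
        refine (tendsto_ratio m n).congr' ?_
        filter_upwards [eventually_ge_atTop 1] with q hq
        exact (treeR0_up hq hn0 hm).symm
      · rcases eq_or_ne (m + 1) n with hm2 | hm2
        · have hb : besselKer n m = (1 + (m:ℝ)) / (2 * (1 + (n:ℝ))) := by
            rw [besselKer, if_neg hn0, if_neg hm, if_pos hm2, ← hm2]
            push_cast; ring_nf
          rw [hb]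
          refine (tendsto_ratio m n).congr' ?_
          filter_upwards [eventually_ge_atTop 1] with q hq
          exact (treeR0_down hq hm2).symm
        · have hb : besselKer n m = 0 := by
            rw [besselKer, if_neg hn0, if_neg hm, if_neg hm2]
          rw [hb]
          exact tendsto_const_nhds.congr (fun q => (treeR0_zero_of hn0 hm2 hm).symm)
end

section
/- With notation as in Pitman's discrete theorem, the two-dimensional process τ_n = (2M_n − Σ_n, Σ_n) is a Markov chain on the set {(k+2m, k) : k ∈ ℤ, m ∈ ℕ, k + 2m ≥ 0} with transitions: from (k,k), it moves to (k+1,k+1) with probability 1/2 and to (k+1,k−1) with probability 1/2; from (k+2m,k) with m ≥ 1, it moves to (k+2m−1,k+1) with probability 1/2 and to (k+2m+1,k−1) with probability 1/2. -/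
open MeasureTheory ProbabilityTheory Finset

private lemma sup'_range_succ_eq {α : Type*} [SemilatticeSup α] (f : ℕ → α) (n : ℕ) :
    (Finset.range (n+1+1)).sup' Finset.nonempty_range_add_one f
      = f (n+1) ⊔ (Finset.range (n+1)).sup' Finset.nonempty_range_add_one f := by
  simp [Finset.range_add_one, Finset.sup'_insert]

private lemma meas_sup'_aux {α : Type*} [MeasurableSpace α] (f : ℕ → α → ℤ) (j : ℕ)
    (hf : ∀ i ≤ j, Measurable (f i)) :
    Measurable (fun ω => (Finset.range (j+1)).sup' Finset.nonempty_range_add_one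
      (fun k => f k ω)) := by
  induction j with
  | zero => simpa using hf 0 le_rfl
  | succ n ih =>
    have heq : (fun ω => (Finset.range (n+2)).sup' Finset.nonempty_range_add_one
        (fun k => f k ω))
        = fun ω => max (f (n+1) ω) ((Finset.range (n+1)).sup' Finset.nonempty_range_add_one
          (fun k => f k ω)) := by
      funext ω
      exact sup'_range_succ_eq _ n
    rw [heq]
    exact (hf (n+1) le_rfl).max (ih fun i hi => hf i (hi.trans (Nat.le_succ n)))

/-- The two-dimensional process `τ_n = (2 M_n − Σ_n, Σ_n)` built from the simple symmetric
random walk is a Markov chain on `{(k + 2m, k) : k ∈ ℤ, m ∈ ℕ, k + 2m ≥ 0}` with the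
transitions of Pitman's walk on the graph `G̃`. -/
theorem pitman_two_dimensional_walk
    {Ω : Type*} [MeasurableSpace Ω] (μ : Measure Ω) [IsProbabilityMeasure μ]
    (ε : ℕ → Ω → ℤ) (hmeas : ∀ i, Measurable (ε i))
    (hindep : iIndepFun ε μ)
    (hval : ∀ i, μ {ω | ε i ω = 1} = 1/2 ∧ μ {ω | ε i ω = -1} = 1/2)
    (Sig : ℕ → Ω → ℤ) (hSig : ∀ n ω, Sig n ω = ∑ i ∈ Finset.range n, ε i ω)
    (M : ℕ → Ω → ℤ)
    (hM : ∀ n ω, M n ω = (Finset.range (n+1)).sup' Finset.nonempty_range_add_one (fun k => Sig k ω))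
    (τ : ℕ → Ω → ℤ × ℤ) (hτ : ∀ n ω, τ n ω = (2 * M n ω - Sig n ω, Sig n ω)) :
    (∀ n ω, ∃ m : ℕ, (τ n ω).1 = (τ n ω).2 + 2 * (m : ℤ) ∧ 0 ≤ (τ n ω).1) ∧
    ∀ (n : ℕ) (path : ℕ → ℤ × ℤ) (k : ℤ) (m : ℕ),
      path n = (k + 2 * (m : ℤ), k) →
      μ {ω | ∀ j ≤ n, τ j ω = path j} ≠ 0 →
      ((m = 0 →
          μ[|{ω | ∀ j ≤ n, τ j ω = path j}] {ω | τ (n+1) ω = (k+1, k+1)} = ENNReal.ofReal (1/2) ∧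
          μ[|{ω | ∀ j ≤ n, τ j ω = path j}] {ω | τ (n+1) ω = (k+1, k-1)} = ENNReal.ofReal (1/2)) ∧
       (1 ≤ m →
          μ[|{ω | ∀ j ≤ n, τ j ω = path j}] {ω | τ (n+1) ω = (k + 2*(m:ℤ) - 1, k+1)}
            = ENNReal.ofReal (1/2) ∧
          μ[|{ω | ∀ j ≤ n, τ j ω = path j}] {ω | τ (n+1) ω = (k + 2*(m:ℤ) + 1, k-1)}
            = ENNReal.ofReal (1/2))) := by
  -- basic facts
  have hSle : ∀ n ω, Sig n ω ≤ M n ω := fun n ω => by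
    rw [hM]
    exact Finset.le_sup' (fun k => Sig k ω) (Finset.self_mem_range_succ n)
  have hS0le : ∀ n ω, (0:ℤ) ≤ M n ω := fun n ω => by
    have h0 : Sig 0 ω = 0 := by simp [hSig]
    have h1 : Sig 0 ω ≤ M n ω := by
      rw [hM]
      exact Finset.le_sup' (fun k => Sig k ω) (Finset.mem_range.2 (Nat.succ_pos n))
    omega
  have hSigMeas : ∀ n, Measurable (Sig n) := by
    intro n
    have : Sig n = fun ω => ∑ i ∈ Finset.range n, ε i ω := funext (hSig n)
    rw [this]
    exact Finset.measurable_sum _ fun i _ => hmeas i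
  have hMMeas : ∀ n, Measurable (M n) := by
    intro n
    have : M n = fun ω => (Finset.range (n+1)).sup' Finset.nonempty_range_add_one
        (fun k => Sig k ω) := funext (hM n)
    rw [this]
    exact meas_sup'_aux Sig n fun i _ => hSigMeas i
  have hτMeas : ∀ n, Measurable (τ n) := by
    intro n
    have : τ n = fun ω => ((2 * M n ω - Sig n ω, Sig n ω) : ℤ × ℤ) := funext (hτ n)
    rw [this]
    exact (((measurable_const.mul (hMMeas n)).sub (hSigMeas n)).prodMk (hSigMeas n))
  constructor
  · intro n ω
    have h1 := hSle n ω
    have h2 := hS0le n ω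
    have h3 : ((M n ω - Sig n ω).toNat : ℤ) = M n ω - Sig n ω :=
      Int.toNat_of_nonneg (by omega)
    refine ⟨(M n ω - Sig n ω).toNat, ?_, ?_⟩ <;> rw [hτ] <;> simp only <;> omega
  intro n path k m hpath hA0
  set A : Set Ω := {ω | ∀ j ≤ n, τ j ω = path j} with hAdef
  -- A is measurable
  have hAeq : A = ⋂ j ∈ Set.Iic n, τ j ⁻¹' {path j} := by
    ext ω; simp [hAdef, Set.mem_iInter]
  have hAmeas : MeasurableSet A := by
    rw [hAeq]
    exact MeasurableSet.biInter (Set.to_countable _)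
      fun j _ => (hτMeas j) (measurableSet_singleton _)
  -- on A, Sig n = k and M n = k + m
  have hStep : ∀ ω, Sig (n+1) ω = Sig n ω + ε n ω := fun ω => by
    rw [hSig, hSig, Finset.sum_range_succ]
  have hMStep : ∀ ω, M (n+1) ω = max (Sig (n+1) ω) (M n ω) := fun ω => by
    rw [hM (n+1), hM n]
    exact sup'_range_succ_eq _ n
  have honA : ∀ ω ∈ A, Sig n ω = k ∧ M n ω = k + m := by
    intro ω hω
    have h1 : τ n ω = (k + 2 * (m:ℤ), k) := by rw [hω n le_rfl, hpath]
    rw [hτ] at h1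
    have h2 := congrArg Prod.fst h1
    have h3 := congrArg Prod.snd h1
    simp only at h2 h3
    constructor <;> omega
  -- independence machinery
  set m' : MeasurableSpace Ω := ⨆ i ∈ Set.Iio n, MeasurableSpace.comap (ε i) inferInstance
    with hm'def
  have hεm' : ∀ i < n, Measurable[m'] (ε i) := by
    intro i hi
    rw [measurable_iff_comap_le]
    exact le_biSup (fun i => MeasurableSpace.comap (ε i) inferInstance) (Set.mem_Iio.2 hi)
  have hSigm' : ∀ j ≤ n, Measurable[m'] (Sig j) := by
    intro j hj
    have : Sig j = fun ω => ∑ i ∈ Finset.range j, ε i ω := funext (hSig j)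
    rw [this]
    exact Finset.measurable_sum _ fun i hi => hεm' i (lt_of_lt_of_le (Finset.mem_range.1 hi) hj)
  have hτm' : ∀ j ≤ n, Measurable[m'] (τ j) := by
    intro j hj
    have hMj : Measurable[m'] (M j) := by
      have : M j = fun ω => (Finset.range (j+1)).sup' Finset.nonempty_range_add_one
          (fun k => Sig k ω) := funext (hM j)
      rw [this]
      exact @meas_sup'_aux Ω m' Sig j fun i hi => hSigm' i (hi.trans hj)
    have : τ j = fun ω => ((2 * M j ω - Sig j ω, Sig j ω) : ℤ × ℤ) := funext (hτ j)
    rw [this]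
    exact ((measurable_const.mul hMj).sub (hSigm' j hj)).prodMk (hSigm' j hj)
  have hAm' : MeasurableSet[m'] A := by
    rw [hAeq]
    exact MeasurableSet.biInter (Set.to_countable _)
      fun j hj => (hτm' j hj) (measurableSet_singleton _)
  have hIndep : Indep m' (MeasurableSpace.comap (ε n) inferInstance) μ := by
    have h := indep_iSup_of_disjoint (fun i => (hmeas i).comap_le)
      ((iIndepFun_iff_iIndep _ _ _).1 hindep) (S := Set.Iio n) (T := {n})
      (by simp [Set.disjoint_left]; omega)
    simpa [hm'def] using h
  have hkey : ∀ c : ℤ, μ {ω | ε n ω = c} = 1/2 →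
      ∀ t : ℤ × ℤ, (A ∩ {ω | τ (n+1) ω = t} = A ∩ {ω | ε n ω = c}) →
      μ[|A] {ω | τ (n+1) ω = t} = ENNReal.ofReal (1/2) := by
    intro c hc t hset
    have hεset : MeasurableSet[MeasurableSpace.comap (ε n) inferInstance] {ω | ε n ω = c} :=
      ⟨{c}, measurableSet_singleton c, rfl⟩
    have hmul : μ (A ∩ {ω | ε n ω = c}) = μ A * μ {ω | ε n ω = c} :=
      (Indep_iff _ _ _).1 hIndep A {ω | ε n ω = c} hAm' hεset
    rw [cond_apply hAmeas, hset, hmul, hc]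
    rw [ENNReal.ofReal_div_of_pos (by norm_num)]
    rw [← mul_assoc, ENNReal.inv_mul_cancel hA0 (measure_ne_top μ A), one_mul]
    norm_num
  -- set equalities
  have hseteq : ∀ (c : ℤ) (t : ℤ × ℤ), (c = 1 ∨ c = -1) → t.2 = k + c →
      (∀ ω ∈ A, ε n ω = c → τ (n+1) ω = t) →
      A ∩ {ω | τ (n+1) ω = t} = A ∩ {ω | ε n ω = c} := by
    intro c t hc ht hfw
    ext ω
    simp only [Set.mem_inter_iff, Set.mem_setOf_eq]
    constructor
    · rintro ⟨hω, hτt⟩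
      refine ⟨hω, ?_⟩
      have h2 := congrArg Prod.snd hτt
      rw [hτ] at h2
      simp only at h2
      have := (honA ω hω).1
      have := hStep ω
      omega
    · rintro ⟨hω, hε⟩
      exact ⟨hω, hfw ω hω hε⟩
  have hτsucc : ∀ ω ∈ A, ∀ c : ℤ,
      ε n ω = c → τ (n+1) ω = (2 * max (k + c) (k + m) - (k + c), k + c) := by
    intro ω hω c hε
    obtain ⟨hS, hMn⟩ := honA ω hω
    have h1 : Sig (n+1) ω = k + c := by rw [hStep, hS, hε]
    have h2 : M (n+1) ω = max (k + c) (k + m) := by rw [hMStep, h1, hMn]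
    rw [hτ, h1, h2]
  refine ⟨fun hm0 => ?_, fun hm1 => ?_⟩
  · subst hm0
    constructor
    · refine hkey 1 (hval n).1 _ (hseteq 1 _ (Or.inl rfl) rfl fun ω hω hε => ?_)
      rw [hτsucc ω hω 1 hε, max_eq_left (by omega)]
      simp only [Prod.mk.injEq, and_true]
      omega
    · refine hkey (-1) (hval n).2 _ (hseteq (-1) _ (Or.inr rfl) (by ring) fun ω hω hε => ?_)
      rw [hτsucc ω hω (-1) hε, max_eq_right (by omega)]
      simp only [Prod.mk.injEq, and_true]
      omega
  · constructor
    · refine hkey 1 (hval n).1 _ (hseteq 1 _ (Or.inl rfl) rfl fun ω hω hε => ?_)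
      rw [hτsucc ω hω 1 hε, max_eq_right (by omega)]
      simp only [Prod.mk.injEq, and_true]
      omega
    · refine hkey (-1) (hval n).2 _ (hseteq (-1) _ (Or.inr rfl) (by ring) fun ω hω hε => ?_)
      rw [hτsucc ω hω (-1) hε, max_eq_right (by omega)]
      simp only [Prod.mk.injEq, and_true]
      omega
end

section
/- Let M = (M₁ M₂; M₃ M₄) ∈ SU(p,q) with p ≤ q, written in blocks with M₁ of size p×p. If M = k₁ D_p(r) k₂ is a Cartan decomposition with k₁, k₂ in the block-diagonal maximal compact subgroup U(p)×U(q) ∩ SU(p,q) and r ∈ ℝ^p with r₁ ≥ ⋯ ≥ r_p ≥ 0, then the singular values of M₁, written in decreasing order, equal (cosh r₁, …, cosh r_p). -/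
open Matrix

noncomputable section

/-- The quadratic form matrix `J = diag(I_p, −I_q)` defining `SU(p,q)`. -/
def Jpq (p q : ℕ) : Matrix (Fin p ⊕ Fin q) (Fin p ⊕ Fin q) ℂ :=
  Matrix.fromBlocks 1 0 0 (-1)

/-- The Cartan torus element `D_p(r)` of `SU(p,q)`. -/
def cartanD (p q : ℕ) (r : Fin p → ℝ) : Matrix (Fin p ⊕ Fin q) (Fin p ⊕ Fin q) ℂ :=
  Matrix.fromBlocks
    (Matrix.diagonal fun i => (Real.cosh (r i) : ℂ))
    (Matrix.of fun (i : Fin p) (j : Fin q) =>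
      if (j : ℕ) = (i : ℕ) then (Real.sinh (r i) : ℂ) else 0)
    (Matrix.of fun (i : Fin q) (j : Fin p) =>
      if (i : ℕ) = (j : ℕ) then (Real.sinh (r j) : ℂ) else 0)
    (Matrix.of fun (i j : Fin q) =>
      if i = j then (if h : (i : ℕ) < p then (Real.cosh (r ⟨i, h⟩) : ℂ) else 1) else 0)

open Polynomial in
lemma charpoly_conj_aux {n : Type*} [DecidableEq n] [Fintype n] {R : Type*} [CommRing R]
    (U A V : Matrix n n R) (hUV : U * V = 1) :
    (U * A * V).charpoly = A.charpoly := by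
  have hmap : (C : R →+* R[X]).mapMatrix U * (C : R →+* R[X]).mapMatrix V = 1 := by
    rw [← _root_.map_mul, hUV, _root_.map_one]
  have hmap' : (C : R →+* R[X]).mapMatrix V * (C : R →+* R[X]).mapMatrix U = 1 := by
    rw [← _root_.map_mul, mul_eq_one_comm.mp hUV, _root_.map_one]
  have h1 : Matrix.charmatrix (U * A * V) =
      (C : R →+* R[X]).mapMatrix U * Matrix.charmatrix A * (C : R →+* R[X]).mapMatrix V := by
    unfold Matrix.charmatrix
    rw [Matrix.mul_sub, Matrix.sub_mul, _root_.map_mul, _root_.map_mul]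
    congr 1
    have hs : (Matrix.scalar n (X : R[X])) = (X : R[X]) • (1 : Matrix n n R[X]) := by
      simp [Matrix.scalar, Matrix.smul_one_eq_diagonal]
    rw [hs, Matrix.mul_smul, Matrix.mul_one, Matrix.smul_mul, hmap]
  have := congrArg Matrix.det h1
  rw [Matrix.det_mul, Matrix.det_mul] at this
  calc (U * A * V).charpoly = _ := this
    _ = A.charpoly := by
        rw [mul_comm, ← mul_assoc, ← Matrix.det_mul, hmap', Matrix.det_one, one_mul]
        rfl

open Polynomial in
lemma charpoly_diagonal_aux {n : Type*} [DecidableEq n] [Fintype n] {R : Type*} [CommRing R]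
    (d : n → R) :
    (Matrix.diagonal d).charpoly = ∏ i : n, (X - C (d i)) := by
  have h : Matrix.charmatrix (Matrix.diagonal d) =
      Matrix.diagonal (fun i => (X : R[X]) - C (d i)) := by
    ext i j
    by_cases hij : i = j
    · subst hij; simp
    · simp [Matrix.charmatrix_apply_ne _ _ _ hij, Matrix.diagonal_apply_ne _ hij]
  rw [Matrix.charpoly, h, Matrix.det_diagonal]

/-- If `M ∈ SU(p,q)` has Cartan decomposition `M = k₁ D_p(r) k₂` with `k₁, k₂` in the
block-diagonal maximal compact subgroup and `r` in the closed Weyl chamber, then the singular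
values of the upper-left `p×p` block `M₁`, in decreasing order, are `(cosh r₁, …, cosh r_p)`:
the eigenvalues of `M₁ M₁*` are the `(cosh rᵢ)²` (and `cosh r` is decreasing). -/
theorem singular_values_of_block_of_cartan (p q : ℕ) (hpq : p ≤ q)
    (M k₁ k₂ : Matrix (Fin p ⊕ Fin q) (Fin p ⊕ Fin q) ℂ)
    (r : Fin p → ℝ) (hr : ∀ i j : Fin p, i ≤ j → r j ≤ r i) (hr0 : ∀ i, 0 ≤ r i)
    (hM : Mᴴ * Jpq p q * M = Jpq p q) (hMdet : M.det = 1)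
    (hk₁ : ∃ (K1 : Matrix (Fin p) (Fin p) ℂ) (K4 : Matrix (Fin q) (Fin q) ℂ),
      K1ᴴ * K1 = 1 ∧ K4ᴴ * K4 = 1 ∧ k₁ = Matrix.fromBlocks K1 0 0 K4 ∧ k₁.det = 1)
    (hk₂ : ∃ (K1 : Matrix (Fin p) (Fin p) ℂ) (K4 : Matrix (Fin q) (Fin q) ℂ),
      K1ᴴ * K1 = 1 ∧ K4ᴴ * K4 = 1 ∧ k₂ = Matrix.fromBlocks K1 0 0 K4 ∧ k₂.det = 1)
    (hCartan : M = k₁ * cartanD p q r * k₂) :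
    (M.toBlocks₁₁ * (M.toBlocks₁₁)ᴴ).charpoly.roots =
      Multiset.map (fun i : Fin p => ((Real.cosh (r i) : ℂ)) ^ 2) Finset.univ.val ∧
    ∀ i j : Fin p, i ≤ j → Real.cosh (r j) ≤ Real.cosh (r i) := by
  obtain ⟨A, A4, hA, _, hk₁eq, _⟩ := hk₁
  obtain ⟨B, B4, hB, _, hk₂eq, _⟩ := hk₂
  set D : Matrix (Fin p) (Fin p) ℂ := Matrix.diagonal fun i => (Real.cosh (r i) : ℂ) with hD
  -- compute the upper-left block of M
  have hblock : M.toBlocks₁₁ = A * D * B := by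
    rw [hCartan, hk₁eq, hk₂eq]
    show ((Matrix.fromBlocks A 0 0 A4 * cartanD p q r) * Matrix.fromBlocks B 0 0 B4).toBlocks₁₁
      = A * D * B
    rw [cartanD, Matrix.fromBlocks_multiply, Matrix.fromBlocks_multiply]
    simp [Matrix.toBlocks₁₁, Matrix.fromBlocks, -Complex.ofReal_cosh]
    rfl
  have hDH : Dᴴ = D := by
    rw [hD, Matrix.diagonal_conjTranspose]
    ext i j
    rcases eq_or_ne i j with h | h
    · subst h
      simp only [Matrix.diagonal_apply_eq, Pi.star_apply, Complex.star_def,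
        ← Complex.ofReal_cosh, Complex.conj_ofReal]
    · simp [Matrix.diagonal_apply_ne _ h]
  have hBB : B * Bᴴ = 1 := mul_eq_one_comm.mp hB
  have hNN : M.toBlocks₁₁ * (M.toBlocks₁₁)ᴴ =
      A * Matrix.diagonal (fun i => ((Real.cosh (r i) : ℂ)) ^ 2) * Aᴴ := by
    rw [hblock, Matrix.conjTranspose_mul, Matrix.conjTranspose_mul, hDH]
    rw [show A * D * B * (Bᴴ * (D * Aᴴ)) = A * (D * (B * Bᴴ) * D) * Aᴴ by
      simp only [Matrix.mul_assoc]]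
    rw [hBB, Matrix.mul_one, hD, Matrix.diagonal_mul_diagonal]
    rw [show (fun i => ((Real.cosh (r i) : ℂ)) * ((Real.cosh (r i) : ℂ)))
        = fun i => ((Real.cosh (r i) : ℂ)) ^ 2 from funext fun i => (sq _).symm]
  have hAinv : A * Aᴴ = 1 := mul_eq_one_comm.mp hA
  constructor
  · rw [hNN, charpoly_conj_aux _ _ _ hAinv, charpoly_diagonal_aux]
    rw [show (∏ i : Fin p, (Polynomial.X - Polynomial.C (((Real.cosh (r i) : ℂ)) ^ 2)))
        = ((Finset.univ.val.map fun i : Fin p => ((Real.cosh (r i) : ℂ)) ^ 2).map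
            fun a => Polynomial.X - Polynomial.C a).prod by
      rw [Multiset.map_map]; rfl]
    exact Polynomial.roots_multiset_prod_X_sub_C _
  · intro i j hij
    exact Real.cosh_le_cosh.mpr (by
      rw [abs_of_nonneg (hr0 j), abs_of_nonneg (hr0 i)]; exact hr i j hij)

end
end

section
/- As q → ∞ with p fixed, the Calogero–Moser–Sutherland Hamiltonian of type BC_p for SU(p,q), H = Σ_{k=1}^p (∂²/∂r_k² − m₁(m₁+2m₂−2)/(4 sinh² r_k) − m₂(m₂−2)/sinh²(2r_k)) with (m₁,m₂,m₃) = (2(q−p),1,2), evaluated at shifted argument r + log(2q)·(1,…,1), converges pointwise (as an operator on smooth functions, i.e. the potential converges pointwise) to the Toda-type Hamiltonian Σ_{k=1}^p (∂²/∂r_k² − e^{−2r_k}). Equivalently: for every fixed r ∈ ℝ, lim_{q→∞} m₁(m₁+2m₂−2)/(4 sinh²(r + log 2q)) + m₂(m₂−2)/sinh²(2(r+log 2q)) = e^{−2r} with m₁ = 2(q−p), m₂ = 1. -/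
open Filter Topology Real

private noncomputable def inoG (p : ℕ) (r : ℝ) (t : ℝ) : ℝ :=
  4 * (1 - p * t) ^ 2 / (2 * Real.exp r - t ^ 2 * Real.exp (-r) / 2) ^ 2
    - 4 * t ^ 4 / (4 * Real.exp (2 * r) - t ^ 4 * Real.exp (-2 * r) / 4) ^ 2

/-- The Inozemtsev limit for `SU(p,q)`: with `m₁ = 2(q−p)`, `m₂ = 1`, the potential of the
`BC_p` Calogero–Moser–Sutherland Hamiltonian, shifted by `log(2q)`, converges pointwise to the
Toda wall `e^{−2r}` as `q → ∞`. -/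
theorem inozemtsev_limit (p : ℕ) (r : ℝ) :
    Tendsto (fun q : ℕ =>
        (2 * ((q : ℝ) - p)) * (2 * ((q : ℝ) - p) + 2 * 1 - 2)
            / (4 * Real.sinh (r + Real.log (2 * q)) ^ 2)
          + 1 * (1 - 2) / Real.sinh (2 * (r + Real.log (2 * q))) ^ 2)
      atTop (𝓝 (Real.exp (-2 * r))) := by
  have hcont : ContinuousAt (inoG p r) 0 := by
    unfold inoG
    apply ContinuousAt.sub
    · apply ContinuousAt.div (by fun_prop) (by fun_prop)
      have : (0:ℝ) < Real.exp r := Real.exp_pos r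
      simp
    · apply ContinuousAt.div (by fun_prop) (by fun_prop)
      have : (0:ℝ) < Real.exp (2*r) := Real.exp_pos _
      simp
  have hval : inoG p r 0 = Real.exp (-2 * r) := by
    unfold inoG
    have h1 : Real.exp r ≠ 0 := (Real.exp_pos r).ne'
    have h2 : Real.exp (-2 * r) = (Real.exp r ^ 2)⁻¹ := by
      rw [show (-2*r:ℝ) = -(r+r) by ring, Real.exp_neg, Real.exp_add]; ring_nf
    rw [h2]
    norm_num
    field_simp
    ring
  have hlim : Tendsto (fun q : ℕ => inoG p r (1 / (q:ℝ))) atTop (𝓝 (Real.exp (-2 * r))) := by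
    rw [← hval]
    exact (hcont.tendsto).comp tendsto_one_div_atTop_nhds_zero_nat
  refine hlim.congr' ?_
  have h1 : ∀ᶠ q : ℕ in atTop, Real.exp (-r) < 2 * (q:ℝ) := by
    have := tendsto_natCast_atTop_atTop (R := ℝ)
    filter_upwards [this.eventually (eventually_gt_atTop (Real.exp (-r)))] with q hq
    have : (0:ℝ) < (q:ℝ) := lt_trans (Real.exp_pos _) hq
    linarith
  have h2 : ∀ᶠ q : ℕ in atTop, 1 ≤ (q:ℝ) := by
    filter_upwards [eventually_ge_atTop 1] with q hq
    exact_mod_cast hq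
  filter_upwards [h1, h2] with q he hq1
  have hQ : (0:ℝ) < (q:ℝ) := by linarith
  have hx : 0 < r + Real.log (2 * q) := by
    have := (Real.lt_log_iff_exp_lt (by linarith : (0:ℝ) < 2 * q)).2 he
    linarith
  -- expand sinh
  have hEr : (0:ℝ) < Real.exp r := Real.exp_pos r
  have hEmr : Real.exp (-r) = (Real.exp r)⁻¹ := Real.exp_neg r
  have hsinh : Real.sinh (r + Real.log (2 * q)) =
      (2 * q * Real.exp r - Real.exp (-r) / (2 * q)) / 2 := by
    rw [Real.sinh_eq, Real.exp_add, Real.exp_log (by linarith), neg_add, Real.exp_add,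
      Real.exp_neg (Real.log (2 * q)), Real.exp_log (by linarith)]
    ring
  have hsinh2 : Real.sinh (2 * (r + Real.log (2 * q))) =
      (4 * q^2 * Real.exp (2 * r) - Real.exp (-(2*r)) / (4 * q^2)) / 2 := by
    have e1 : 2 * (r + Real.log (2 * q)) = (2*r) + (Real.log (2*q) + Real.log (2*q)) := by ring
    rw [e1, Real.sinh_eq, Real.exp_add, Real.exp_add, Real.exp_log (by linarith), neg_add,
      Real.exp_add, neg_add, Real.exp_add, Real.exp_neg (Real.log (2*q)),
      Real.exp_log (by linarith)]
    ring
  -- positivity of the expanded sinh values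
  have hs1 : 0 < 2 * (q:ℝ) * Real.exp r - Real.exp (-r) / (2 * q) := by
    have := Real.sinh_pos_iff.2 hx
    rw [hsinh] at this; linarith
  have hs2 : 0 < 4 * (q:ℝ)^2 * Real.exp (2*r) - Real.exp (-(2*r)) / (4 * q^2) := by
    have := Real.sinh_pos_iff.2 (by linarith : 0 < 2 * (r + Real.log (2 * q)))
    rw [hsinh2] at this; linarith
  -- denominators of inoG are nonzero at t = 1/q
  have hd1 : 2 * Real.exp r - (1/(q:ℝ)) ^ 2 * Real.exp (-r) / 2 ≠ 0 := by
    have : (1/(q:ℝ)) * (2 * q * Real.exp r - Real.exp (-r) / (2 * q)) =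
        2 * Real.exp r - (1/(q:ℝ)) ^ 2 * Real.exp (-r) / 2 := by
      field_simp
    rw [← this]
    positivity
  have hd2 : 4 * Real.exp (2*r) - (1/(q:ℝ)) ^ 4 * Real.exp (-(2*r)) / 4 ≠ 0 := by
    have : (1/(q:ℝ))^2 * (4 * q^2 * Real.exp (2*r) - Real.exp (-(2*r)) / (4 * q^2)) =
        4 * Real.exp (2*r) - (1/(q:ℝ)) ^ 4 * Real.exp (-(2*r)) / 4 := by
      field_simp
    rw [← this]
    positivity
  have hE2 : Real.exp (2*r) = (Real.exp r)^2 := by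
    rw [two_mul, Real.exp_add]; ring
  have hEm2 : Real.exp (-(2*r)) = ((Real.exp r)^2)⁻¹ := by
    rw [Real.exp_neg, hE2]
  set E := Real.exp r with hE
  have h1' : (1:ℝ) < 2 * q * E := by
    have := mul_lt_mul_of_pos_right he hEr
    rw [hEmr, inv_mul_cancel₀ hEr.ne'] at this; linarith
  have hA : (0:ℝ) < 4 * q^2 * E^2 - 1 := by nlinarith
  have hB : (0:ℝ) < 16 * q^4 * E^4 - 1 := by nlinarith
  have e1 : 2 * (q:ℝ) * E - Real.exp (-r) / (2 * q) = (4 * q^2 * E^2 - 1) / (2 * q * E) := by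
    rw [hEmr]; field_simp; ring
  have e2 : 4 * (q:ℝ)^2 * Real.exp (2*r) - Real.exp (-(2*r)) / (4 * q^2)
      = (16 * q^4 * E^4 - 1) / (4 * q^2 * E^2) := by
    rw [hEm2, hE2]; field_simp; ring
  have e3 : 2 * E - (1/(q:ℝ))^2 * Real.exp (-r) / 2 = (4 * q^2 * E^2 - 1) / (2 * q^2 * E) := by
    rw [hEmr]; field_simp; ring
  have e4 : 4 * Real.exp (2*r) - (1/(q:ℝ))^4 * Real.exp (-(2*r)) / 4
      = (16 * q^4 * E^4 - 1) / (4 * q^4 * E^2) := by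
    rw [hEm2, hE2]; field_simp; ring
  show inoG p r (1/(q:ℝ)) = _
  unfold inoG
  rw [show ((-2:ℝ) * r) = -(2*r) by ring, hsinh, hsinh2, e1, e2, ← hE, e3, e4]
  field_simp [hA.ne', hB.ne', hQ.ne', hEr.ne']
  ring
end
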